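/- Let Y be a compact Hausdorff space, let X ⊆ Y be a closed subspace, and suppose there exist an open set U ⊆ Y with X ⊆ U and a continuous retraction r : U → X (r(x) = x for x ∈ X). Then I_f(X) is a neighborhood retract of I_f(Y): there exist an open subset W of I_f(Y) containing I_f(X) and a continuous map R : W → I_f(X) with R(μ) = μ for every μ ∈ I_f(X), where I_f(X) is identified with its image in I_f(Y) under the map induced by the inclusion X ↪ Y. -/

import Mathlib

open Real Set Topology

/-- The Dirac measure `δ_x` on `X`, as a functional on `C(X, ℝ)`: `δ_x(φ) = φ(x)`. -/
def dirac (X : Type*) [TopologicalSpace X] (x : X) : C(X, ℝ) → ℝ := fun φ => φ x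

/-- The max-plus combination `⊕_{i=1}^n λ_i ⊙ δ_{x_i}`, i.e. the functional
`φ ↦ max_{1 ≤ i ≤ n} (λ_i + φ(x_i))`. -/
noncomputable def maxPlus {X : Type*} [TopologicalSpace X] {n : ℕ}
    (lam : Fin n → ℝ) (x : Fin n → X) : C(X, ℝ) → ℝ :=
  fun φ => ⨆ i, (lam i + φ (x i))

/-- `μ : C(X, ℝ) → ℝ` is an idempotent probability measure:
(1) `μ(c_λ) = λ` for constant functions; (2) `μ(λ + φ) = λ + μ(φ)`;
(3) `μ(max(φ, ψ)) = max(μ(φ), μ(ψ))`. -/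
def IsIPM {X : Type*} [TopologicalSpace X] (μ : C(X, ℝ) → ℝ) : Prop :=
  (∀ c : ℝ, μ (ContinuousMap.const X c) = c) ∧
  (∀ (c : ℝ) (φ : C(X, ℝ)), μ (ContinuousMap.const X c + φ) = c + μ φ) ∧
  (∀ φ ψ : C(X, ℝ), μ (φ ⊔ ψ) = max (μ φ) (μ ψ))

/-- Membership in `I_ω(X)`: idempotent probability measures with finite support, i.e.
`μ = ⊕_{i=1}^n λ_i ⊙ δ_{x_i}` with `x_i` pairwise distinct, `λ_i ≤ 0` and `max_i λ_i = 0`. -/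
def IsFS {X : Type*} [TopologicalSpace X] (μ : C(X, ℝ) → ℝ) : Prop :=
  ∃ n : ℕ, 0 < n ∧ ∃ (x : Fin n → X) (lam : Fin n → ℝ),
    Function.Injective x ∧ (∀ i, lam i ≤ 0) ∧ (∃ i, lam i = 0) ∧ μ = maxPlus lam x

/-- Membership in `I_f(X)`: `μ = ⊕_{i=1}^n λ_i ⊙ δ_{x_i}` with `x_i` pairwise distinct,
a unique index `i₀` with `λ_{i₀} = 0`, and `λ_i ≤ -ln(n+1)` for every `i ≠ i₀`. -/
def IsIf {X : Type*} [TopologicalSpace X] (μ : C(X, ℝ) → ℝ) : Prop :=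
  ∃ n : ℕ, 0 < n ∧ ∃ (x : Fin n → X) (lam : Fin n → ℝ) (i0 : Fin n),
    Function.Injective x ∧ lam i0 = 0 ∧
    (∀ i, i ≠ i0 → lam i ≤ -Real.log (n + 1)) ∧ μ = maxPlus lam x

/-- The pushforward `I_f(f)(μ)(ψ) = μ(ψ ∘ f)`. -/
def push {X Y : Type*} [TopologicalSpace X] [TopologicalSpace Y]
    (f : C(X, Y)) (μ : C(X, ℝ) → ℝ) : C(Y, ℝ) → ℝ :=
  fun ψ => μ (ψ.comp f)

/-- The inclusion `Xs ↪ Y` as a continuous map. -/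
def inclMap {Y : Type*} [TopologicalSpace Y] (Xs : Set Y) : C(Xs, Y) :=
  ⟨Subtype.val, continuous_subtype_val⟩

/-! The retraction sends `μ = ⊕ λᵢ ⊙ δ_{xᵢ}` with top point `p ∈ U` to
`δ_{r p} ⊕ ⨁_{u(xᵢ) > 0} (λᵢ + log u(xᵢ)) ⊙ δ_{r xᵢ}`, where `u : Y → [0, 1]` is an Urysohn
function equal to `1` on `X` and vanishing off `U`. To make this independent of the representation
of `μ` it is written as `ψ ↦ μ (max (ψ (r p)) (ψ ∘ r + log u))`. The top point of `μ ∈ I_f(Y)` can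
be read off from `μ` on test functions with values in `[-log 2 / 2, 0]`, which makes it continuous
in `μ`; and `μ` is nonexpansive for the sup norm, so the retraction is continuous on the open set
of measures whose top point lies in `U`. Merging coinciding points of the image family only lowers
their number, so the bound `-log (n + 1)` on the non-top weights survives. -/

open Filter

section MaxPlus

variable {Z : Type*} [TopologicalSpace Z] {n : ℕ}

lemma le_maxPlus (lam : Fin n → ℝ) (x : Fin n → Z) (φ : C(Z, ℝ)) (i : Fin n) :
    lam i + φ (x i) ≤ maxPlus lam x φ :=
  le_ciSup (Finite.bddAbove_range fun i => lam i + φ (x i)) i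

lemma maxPlus_le [Nonempty (Fin n)] {lam : Fin n → ℝ} {x : Fin n → Z} {φ : C(Z, ℝ)} {c : ℝ}
    (h : ∀ i, lam i + φ (x i) ≤ c) : maxPlus lam x φ ≤ c :=
  ciSup_le h

lemma maxPlus_le_maxPlus_add [Nonempty (Fin n)] (lam : Fin n → ℝ) (x : Fin n → Z)
    {φ ψ : C(Z, ℝ)} {d : ℝ} (h : ∀ z, φ z ≤ ψ z + d) :
    maxPlus lam x φ ≤ maxPlus lam x ψ + d :=
  maxPlus_le fun i => by linarith [h (x i), le_maxPlus lam x ψ i]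

lemma maxPlus_const_sup {lam : Fin n → ℝ} {i0 : Fin n} (hle : ∀ i, lam i ≤ 0) (h0 : lam i0 = 0)
    (x : Fin n → Z) (c : ℝ) (φ : C(Z, ℝ)) :
    maxPlus lam x (ContinuousMap.const Z c ⊔ φ) = max c (maxPlus lam x φ) := by
  have : Nonempty (Fin n) := ⟨i0⟩
  apply le_antisymm
  · refine maxPlus_le fun i => ?_
    simp only [ContinuousMap.sup_apply, ContinuousMap.const_apply, ← max_add_add_left]
    exact max_le_max (by linarith [hle i]) (le_maxPlus lam x φ i)
  · refine max_le ?_ (maxPlus_le fun i =>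
      le_trans (by simp) (le_maxPlus lam x (ContinuousMap.const Z c ⊔ φ) i))
    exact le_trans (by simp [h0]) (le_maxPlus lam x (ContinuousMap.const Z c ⊔ φ) i0)

lemma weights_nonpos {lam : Fin n → ℝ} {i0 : Fin n} (h0 : lam i0 = 0)
    (hle : ∀ i, i ≠ i0 → lam i ≤ -log (n + 1)) (i : Fin n) : lam i ≤ 0 := by
  rcases eq_or_ne i i0 with rfl | hi
  · exact h0.le
  · linarith [hle i hi, log_nonneg (le_add_of_nonneg_left (n.cast_nonneg : (0 : ℝ) ≤ n))]

lemma IsIf.abs_sub_le {μ : C(Z, ℝ) → ℝ} (hμ : IsIf μ) {φ ψ : C(Z, ℝ)} {d : ℝ}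
    (h : ∀ z, |φ z - ψ z| ≤ d) : |μ φ - μ ψ| ≤ d := by
  obtain ⟨n, -, x, lam, i0, -, -, -, rfl⟩ := hμ
  have : Nonempty (Fin n) := ⟨i0⟩
  rw [abs_le]
  constructor
  · linarith [maxPlus_le_maxPlus_add lam x (φ := ψ) (ψ := φ) (d := d) fun z => by
      linarith [(abs_le.mp (h z)).1]]
  · linarith [maxPlus_le_maxPlus_add lam x (φ := φ) (ψ := ψ) (d := d) fun z => by
      linarith [(abs_le.mp (h z)).2]]

lemma isIf_of_injective {ι : Type*} [Fintype ι] {x : ι → Z} (hx : Function.Injective x)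
    {lam : ι → ℝ} {i0 : ι} (h0 : lam i0 = 0)
    (hle : ∀ i, i ≠ i0 → lam i ≤ -log (Fintype.card ι + 1)) :
    IsIf fun φ : C(Z, ℝ) => ⨆ i, lam i + φ (x i) := by
  set e := Fintype.equivFin ι
  refine ⟨Fintype.card ι, Fintype.card_pos_iff.mpr ⟨i0⟩, x ∘ e.symm, lam ∘ e.symm, e i0,
    hx.comp e.symm.injective, by simpa using h0, fun j hj => hle _ ?_, ?_⟩
  · exact fun h => hj (by simp [← h])
  · funext φ
    exact (e.symm.iSup_comp (g := fun i => lam i + φ (x i))).symm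

lemma isIf_of_family {ι : Type*} [Fintype ι] {N : ℕ} (w : ι → Z) (κ : ι → ℝ) (a0 : ι)
    (h0 : κ a0 = 0) (hle : ∀ a, κ a ≤ 0) (v : Fin N → Z) (hwv : range w ⊆ range v)
    (hoff : ∀ a, w a ≠ w a0 → κ a ≤ -log (N + 1)) :
    IsIf fun φ : C(Z, ℝ) => ⨆ a, κ a + φ (w a) := by
  classical
  set S := Finset.univ.image w
  have hfiber : ∀ z : S, (Finset.univ.filter fun a => w a = z).Nonempty := fun z => by
    obtain ⟨a, -, ha⟩ := Finset.mem_image.mp z.2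
    exact ⟨a, by simp [ha]⟩
  set lam : S → ℝ := fun z => (Finset.univ.filter fun a => w a = z).sup' (hfiber z) κ
  have le_lam : ∀ a, κ a ≤ lam ⟨w a, Finset.mem_image_of_mem w (Finset.mem_univ a)⟩ :=
    fun a => Finset.le_sup' κ (by simp)
  have hcard : (S.card : ℝ) ≤ N := by
    have : S ⊆ Finset.univ.image v := fun z hz => by
      obtain ⟨a, -, rfl⟩ := Finset.mem_image.mp hz
      obtain ⟨i, hi⟩ := hwv ⟨a, rfl⟩
      exact Finset.mem_image.mpr ⟨i, Finset.mem_univ i, hi⟩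
    exact_mod_cast (Finset.card_le_card this).trans (Finset.card_image_le.trans (by simp))
  have hsame : (fun φ : C(Z, ℝ) => ⨆ a, κ a + φ (w a)) =
      fun φ : C(Z, ℝ) => ⨆ z : S, lam z + φ z := by
    funext φ
    have : Nonempty ι := ⟨a0⟩
    have : Nonempty S := ⟨⟨w a0, Finset.mem_image_of_mem w (Finset.mem_univ a0)⟩⟩
    apply le_antisymm
    · exact ciSup_le fun a => (add_le_add_left (le_lam a) _).trans
        (le_ciSup (Finite.bddAbove_range (fun z : S => lam z + φ z)) _)
    · refine ciSup_le fun z => ?_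
      obtain ⟨a, ha, hmax⟩ := Finset.exists_mem_eq_sup' (hfiber z) κ
      have hwa : w a = z := (Finset.mem_filter.mp ha).2
      calc lam z + φ z = κ a + φ (w a) := by rw [hwa]; exact congrArg (· + φ z) hmax
        _ ≤ _ := le_ciSup (Finite.bddAbove_range fun a => κ a + φ (w a)) a
  rw [hsame]
  refine isIf_of_injective Subtype.val_injective
    (i0 := ⟨w a0, Finset.mem_image_of_mem w (Finset.mem_univ a0)⟩) ?_ fun z hz => ?_
  · exact le_antisymm (Finset.sup'_le _ _ fun a _ => hle a) (h0 ▸ le_lam a0)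
  · refine Finset.sup'_le _ _ fun a ha => ?_
    have hwa : w a = z := (Finset.mem_filter.mp ha).2
    calc κ a ≤ -log (N + 1) := hoff a fun h => hz (Subtype.ext (hwa.symm.trans h))
      _ ≤ -log (Fintype.card S + 1) := by
        rw [Fintype.card_coe]
        exact neg_le_neg (log_le_log (by positivity) (by linarith))

end MaxPlus

section TopPoint

variable {Z : Type*} [TopologicalSpace Z]

/-- Any depth below `log 2 ≤ log (n + 1)` works: the non-top terms of an element of `I_f` then
lose against the top term on test functions with values in `[-topDepth, 0]`. -/
noncomputable def topDepth : ℝ := log 2 / 2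

lemma topDepth_pos : 0 < topDepth := by
  have := log_pos (by norm_num : (1 : ℝ) < 2)
  unfold topDepth; linarith

lemma topDepth_lt_log_two : topDepth < log 2 := by
  have := log_pos (by norm_num : (1 : ℝ) < 2)
  unfold topDepth; linarith

def HasTopAt (μ : C(Z, ℝ) → ℝ) (p : Z) : Prop :=
  ∀ φ : C(Z, ℝ), (∀ z, φ z ∈ Icc (-topDepth) 0) → μ φ = φ p

lemma hasTopAt_maxPlus {n : ℕ} {lam : Fin n → ℝ} {i0 : Fin n} (h0 : lam i0 = 0)
    (hle : ∀ i, i ≠ i0 → lam i ≤ -log (n + 1)) (x : Fin n → Z) :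
    HasTopAt (maxPlus lam x) (x i0) := by
  intro φ hφ
  have : Nonempty (Fin n) := ⟨i0⟩
  refine le_antisymm (maxPlus_le fun i => ?_) (by simpa [h0] using le_maxPlus lam x φ i0)
  rcases eq_or_ne i i0 with rfl | hi
  · simp [h0]
  · have hlog : log 2 ≤ log (n + 1) :=
      log_le_log (by norm_num) (by linarith [(Nat.one_le_cast.mpr i0.pos : (1 : ℝ) ≤ n)])
    linarith [hle i hi, (hφ (x i)).2, (hφ (x i0)).1, topDepth_lt_log_two]

lemma IsIf.exists_hasTopAt {μ : C(Z, ℝ) → ℝ} (hμ : IsIf μ) : ∃ p, HasTopAt μ p := by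
  obtain ⟨n, -, x, lam, i0, -, h0, hle, rfl⟩ := hμ
  exact ⟨x i0, hasTopAt_maxPlus h0 hle x⟩

noncomputable def topPt (μ : {μ : C(Z, ℝ) → ℝ // IsIf μ}) : Z :=
  μ.2.exists_hasTopAt.choose

lemma hasTopAt_topPt (μ : {μ : C(Z, ℝ) → ℝ // IsIf μ}) : HasTopAt μ.1 (topPt μ) :=
  μ.2.exists_hasTopAt.choose_spec

lemma HasTopAt.mem_of_lt {μ : C(Z, ℝ) → ℝ} {p : Z} (hp : HasTopAt μ p) {O : Set Z}
    {φ : C(Z, ℝ)} (hφ : ∀ z, φ z ∈ Icc (-topDepth) 0) (hOc : ∀ z ∉ O, φ z = -topDepth)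
    (hμφ : -topDepth < μ φ) : p ∈ O := by
  by_contra hpO
  rw [hp φ hφ, hOc p hpO] at hμφ
  exact lt_irrefl _ hμφ

lemma exists_topDepth_test [NormalSpace Z] {A B : Set Z} (hA : IsClosed A) (hB : IsClosed B)
    (hAB : Disjoint A B) :
    ∃ φ : C(Z, ℝ), (∀ z, φ z ∈ Icc (-topDepth) 0) ∧ (∀ z ∈ A, φ z = -topDepth) ∧
      ∀ z ∈ B, φ z = 0 := by
  obtain ⟨f, hfA, hfB, hf⟩ := exists_continuous_zero_one_of_isClosed hA hB hAB
  refine ⟨ContinuousMap.const Z topDepth * (f - 1), fun z => ?_, fun z hz => ?_, fun z hz => ?_⟩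
  · have := topDepth_pos
    simp only [ContinuousMap.mul_apply, ContinuousMap.const_apply, ContinuousMap.sub_apply,
      ContinuousMap.one_apply, mem_Icc]
    constructor <;> nlinarith [(hf z).1, (hf z).2]
  · simp [hfA hz]
  · simp [hfB hz]

lemma HasTopAt.unique [NormalSpace Z] [T1Space Z] {μ : C(Z, ℝ) → ℝ} {p q : Z}
    (hp : HasTopAt μ p) (hq : HasTopAt μ q) : p = q := by
  by_contra hpq
  obtain ⟨φ, hφ, hφp, hφq⟩ := exists_topDepth_test isClosed_singleton isClosed_singleton
    (disjoint_singleton.mpr hpq)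
  have := hq φ hφ
  rw [hp φ hφ, hφp p rfl, hφq q rfl] at this
  linarith [topDepth_pos]

lemma topPt_eq [NormalSpace Z] [T1Space Z] {μ : {μ : C(Z, ℝ) → ℝ // IsIf μ}} {n : ℕ}
    {lam : Fin n → ℝ} {x : Fin n → Z} {i0 : Fin n} (hμ : μ.1 = maxPlus lam x) (h0 : lam i0 = 0)
    (hle : ∀ i, i ≠ i0 → lam i ≤ -log (n + 1)) : topPt μ = x i0 :=
  (hasTopAt_topPt μ).unique (hμ ▸ hasTopAt_maxPlus h0 hle x)

lemma continuous_topPt [NormalSpace Z] [T1Space Z] :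
    Continuous (topPt : {μ : C(Z, ℝ) → ℝ // IsIf μ} → Z) := by
  refine continuous_iff_continuousAt.mpr fun μ0 => ?_
  refine ((nhds_basis_opens _).tendsto_right_iff).mpr fun O ⟨hμ0O, hO⟩ => ?_
  obtain ⟨φ, hφ, hφO, hφμ0⟩ := exists_topDepth_test hO.isClosed_compl isClosed_singleton
    (disjoint_singleton_right.mpr fun h => h hμ0O)
  have hopen : IsOpen {μ : {μ : C(Z, ℝ) → ℝ // IsIf μ} | -topDepth < μ.1 φ} :=
    isOpen_lt continuous_const ((continuous_apply φ).comp continuous_subtype_val)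
  have hmem : -topDepth < μ0.1 φ := by
    rw [hasTopAt_topPt μ0 φ hφ, hφμ0 _ rfl]
    linarith [topDepth_pos]
  filter_upwards [hopen.mem_nhds hmem] with μ hμ
  exact (hasTopAt_topPt μ).mem_of_lt hφ hφO hμ

end TopPoint

section Cutoff

variable {Y : Type*}

/-- `max c (g + log u)` with `log 0 = -∞`. -/
noncomputable def cutoffMax (u g : Y → ℝ) (c : ℝ) (y : Y) : ℝ :=
  if u y = 0 then c else max c (g y + log (u y))

lemma le_cutoffMax (u g : Y → ℝ) (c : ℝ) (y : Y) : c ≤ cutoffMax u g c y := by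
  unfold cutoffMax; split_ifs <;> simp

lemma add_log_le_cutoffMax {u : Y → ℝ} {y : Y} (hy : u y ≠ 0) (g : Y → ℝ) (c : ℝ) :
    g y + log (u y) ≤ cutoffMax u g c y := by
  simp [cutoffMax, hy]

lemma abs_cutoffMax_sub_le (u g : Y → ℝ) (c c' : ℝ) (y : Y) :
    |cutoffMax u g c y - cutoffMax u g c' y| ≤ |c - c'| := by
  unfold cutoffMax; split_ifs
  · exact le_rfl
  · exact abs_max_sub_max_le_abs _ _ _

lemma continuous_cutoffMax [TopologicalSpace Y] {u : Y → ℝ} (hu : Continuous u)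
    (hu0 : ∀ y, 0 ≤ u y) {g : Y → ℝ} (hg : ContinuousOn g {y | u y ≠ 0}) {B : ℝ}
    (hgB : ∀ y, g y ≤ B) (c : ℝ) :
    Continuous (cutoffMax u g c) := by
  have hopen : IsOpen {y | u y ≠ 0} := isOpen_ne_fun hu continuous_const
  refine continuous_iff_continuousAt.mpr fun y0 => ?_
  by_cases hy0 : u y0 = 0
  · -- near a zero of `u` the logarithm pushes `g + log u` below `c`
    have hsmall : ∀ᶠ y in 𝓝 y0, u y < exp (c - B) :=
      (isOpen_lt hu continuous_const).mem_nhds (by simp [hy0, exp_pos])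
    refine (continuousAt_const (y := c)).congr (hsmall.mono fun y hy => ?_)
    unfold cutoffMax
    split_ifs with h
    · rfl
    · have hlog : log (u y) < c - B := by
        simpa using log_lt_log (lt_of_le_of_ne (hu0 y) (Ne.symm h)) hy
      exact (max_eq_left (by linarith [hgB y])).symm
  · have heq : (fun y => max c (g y + log (u y))) =ᶠ[𝓝 y0] cutoffMax u g c :=
      eventually_of_mem (hopen.mem_nhds hy0) fun y hy => by simp [cutoffMax, show u y ≠ 0 from hy]
    refine ContinuousAt.congr ?_ heq
    exact continuousAt_const.max ((hg.continuousAt (hopen.mem_nhds hy0)).add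
      ((continuousAt_log hy0).comp hu.continuousAt))

end Cutoff

lemma maxPlus_cutoffMax {Z : Type*} [TopologicalSpace Z] {n : ℕ} {lam : Fin n → ℝ} {i0 : Fin n}
    (hle : ∀ i, lam i ≤ 0) (h0 : lam i0 = 0) (x : Fin n → Z) {u g : Z → ℝ} {c : ℝ}
    (F : C(Z, ℝ)) (hF : ⇑F = cutoffMax u g c) :
    maxPlus lam x F = ⨆ a : Option {i // u (x i) ≠ 0},
      a.elim c fun i => lam i.1 + log (u (x i)) + g (x i) := by
  have : Nonempty (Fin n) := ⟨i0⟩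
  have hbdd := Finite.bddAbove_range fun a : Option {i // u (x i) ≠ 0} =>
    a.elim c fun i => lam i.1 + log (u (x i)) + g (x i)
  have hc : ∀ i, lam i + c ≤ ⨆ a : Option {i // u (x i) ≠ 0},
      a.elim c fun i => lam i.1 + log (u (x i)) + g (x i) := fun i =>
    (by linarith [hle i] : lam i + c ≤ c).trans (le_ciSup hbdd none)
  apply le_antisymm
  · refine maxPlus_le fun i => ?_
    rw [hF]
    by_cases hi : u (x i) = 0
    · simpa only [cutoffMax, hi, if_true] using hc i
    · simp only [cutoffMax, hi, if_false, ← max_add_add_left]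
      exact max_le (hc i) ((le_of_eq (by simp only [Option.elim]; ring)).trans
        (le_ciSup hbdd (some ⟨i, hi⟩)))
  · refine ciSup_le fun a => ?_
    rcases a with _ | ⟨i, hi⟩
    · calc c ≤ lam i0 + F (x i0) := by rw [h0, hF, zero_add]; exact le_cutoffMax u g c _
        _ ≤ _ := le_maxPlus lam x F i0
    · calc lam i + log (u (x i)) + g (x i) ≤ lam i + F (x i) := by
            rw [hF]; linarith [add_log_le_cutoffMax hi g c]
        _ ≤ _ := le_maxPlus lam x F i

section Retraction

variable {Y : Type*} [TopologicalSpace Y] {Xs U : Set Y}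

open Classical in
noncomputable def retractExt (r : C(U, Xs)) (y : Y) : Y :=
  if h : y ∈ U then r ⟨y, h⟩ else y

lemma retractExt_of_mem (r : C(U, Xs)) {y : Y} (hy : y ∈ U) : retractExt r y = r ⟨y, hy⟩ :=
  dif_pos hy

lemma continuousOn_retractExt (r : C(U, Xs)) : ContinuousOn (retractExt r) U := by
  rw [continuousOn_iff_continuous_domRestrict]
  convert continuous_subtype_val.comp r.continuous using 1
  funext y
  exact retractExt_of_mem r y.2

lemma retractExt_eq_self {r : C(U, Xs)} (hXU : Xs ⊆ U)
    (hr : ∀ (z : U) (hz : (z : Y) ∈ Xs), r z = ⟨(z : Y), hz⟩) {y : Y} (hy : y ∈ Xs) :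
    retractExt r y = y := by
  rw [retractExt_of_mem r (hXU hy), hr ⟨y, hXU hy⟩ hy]

lemma topPt_mem_of_mem_image [NormalSpace Y] [T1Space Y] {μ : {μ : C(Y, ℝ) → ℝ // IsIf μ}}
    (hμ : μ.1 ∈ push (inclMap Xs) '' {ν : C(Xs, ℝ) → ℝ | IsIf ν}) : topPt μ ∈ Xs := by
  obtain ⟨ν, ⟨m, -, z, κ, j0, -, h0, hle, rfl⟩, hν⟩ := hμ
  rw [topPt_eq (x := fun j => (z j : Y)) hν.symm h0 hle]
  exact (z j0).2

variable [CompactSpace Y] (r : C(U, Xs)) (u : C(Y, ℝ)) (hu0 : ∀ y, 0 ≤ u y)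
  (hsupp : ∀ y, u y ≠ 0 → y ∈ U)

noncomputable def cutoffRetract (ψ : C(Y, ℝ)) (c : ℝ) : C(Y, ℝ) :=
  ⟨cutoffMax u (ψ ∘ retractExt r) c, continuous_cutoffMax u.continuous hu0
    ((ψ.continuous.comp_continuousOn (continuousOn_retractExt r)).mono hsupp)
    (fun _ => (le_abs_self _).trans (ψ.norm_coe_le_norm _)) c⟩

noncomputable def retraction (μ : {μ : C(Y, ℝ) → ℝ // IsIf μ}) : C(Y, ℝ) → ℝ :=
  fun ψ => μ.1 (cutoffRetract r u hu0 hsupp ψ (ψ (retractExt r (topPt μ))))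

lemma continuousOn_retraction [T2Space Y] :
    ContinuousOn (retraction r u hu0 hsupp) (topPt ⁻¹' U) := by
  refine continuousOn_pi.mpr fun ψ => ?_
  have hjoint : Continuous fun q : {μ : C(Y, ℝ) → ℝ // IsIf μ} × ℝ =>
      q.1.1 (cutoffRetract r u hu0 hsupp ψ q.2) :=
    continuous_prod_of_continuous_lipschitzWith' _ 1
      (fun μ => LipschitzWith.of_dist_le_mul fun c c' => by
        simpa [Real.dist_eq] using μ.2.abs_sub_le fun y => abs_cutoffMax_sub_le _ _ c c' y)
      (fun c => (continuous_apply (cutoffRetract r u hu0 hsupp ψ c)).comp continuous_subtype_val)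
  have htop : ContinuousOn (fun μ => ψ (retractExt r (topPt μ))) (topPt ⁻¹' U) :=
    (ψ.continuous.comp_continuousOn (continuousOn_retractExt r)).comp
      continuous_topPt.continuousOn (mapsTo_preimage _ _)
  exact hjoint.comp_continuousOn (continuousOn_id.prodMk htop)

lemma retraction_mem_image [T2Space Y] (hu1 : ∀ y, u y ≤ 1)
    {μ : {μ : C(Y, ℝ) → ℝ // IsIf μ}} (hμ : topPt μ ∈ U) :
    retraction r u hu0 hsupp μ ∈ push (inclMap Xs) '' {ν : C(Xs, ℝ) → ℝ | IsIf ν} := by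
  classical
  obtain ⟨n, -, x, lam, i0, -, h0, hle, hμx⟩ := μ.2
  have hp : topPt μ = x i0 := topPt_eq hμx h0 hle
  have hpU : x i0 ∈ U := hp ▸ hμ
  have hlam := weights_nonpos h0 hle
  have hlog : ∀ y, log (u y) ≤ 0 := fun y => log_nonpos (hu0 y) (hu1 y)
  set w : Option {i // u (x i) ≠ 0} → Xs := fun a => a.elim (r ⟨x i0, hpU⟩) fun i =>
    r ⟨x i, hsupp _ i.2⟩
  set κ : Option {i // u (x i) ≠ 0} → ℝ := fun a => a.elim 0 fun i => lam i + log (u (x i))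
  refine ⟨fun χ => ⨆ a, κ a + χ (w a), isIf_of_family w κ none rfl ?_
    (fun i => if h : x i ∈ U then r ⟨x i, h⟩ else r ⟨x i0, hpU⟩) ?_ ?_, ?_⟩
  · rintro (_ | i)
    · exact le_rfl
    · exact add_nonpos (hlam i) (hlog _)
  · rintro _ ⟨_ | i, rfl⟩
    · exact ⟨i0, dif_pos hpU⟩
    · exact ⟨i, dif_pos _⟩
  · rintro (_ | ⟨i, hi⟩) hne
    · exact absurd rfl hne
    · have hi0 : i ≠ i0 := by rintro rfl; exact hne rfl
      show lam i + log (u (x i)) ≤ _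
      linarith [hle i hi0, hlog (x i)]
  · funext ψ
    simp only [push, retraction, hμx, hp]
    rw [maxPlus_cutoffMax hlam h0 x _ rfl]
    congr 1
    funext a
    rcases a with _ | ⟨i, hi⟩
    · simp [κ, w, retractExt_of_mem r hpU, inclMap]
    · simp [κ, w, retractExt_of_mem r (hsupp _ hi), inclMap]

lemma retraction_eq_self [T2Space Y] (hXU : Xs ⊆ U)
    (hr : ∀ (z : U) (hz : (z : Y) ∈ Xs), r z = ⟨(z : Y), hz⟩) (hu1 : ∀ y ∈ Xs, u y = 1)
    {μ : {μ : C(Y, ℝ) → ℝ // IsIf μ}}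
    (hμ : μ.1 ∈ push (inclMap Xs) '' {ν : C(Xs, ℝ) → ℝ | IsIf ν}) :
    retraction r u hu0 hsupp μ = μ.1 := by
  obtain ⟨ν, ⟨m, -, z, κ, j0, -, h0, hle, rfl⟩, hν⟩ := hμ
  have hp : topPt μ = z j0 := topPt_eq (x := fun j => (z j : Y)) hν.symm h0 hle
  funext ψ
  have hF : (cutoffRetract r u hu0 hsupp ψ (ψ (z j0))).comp (inclMap Xs) =
      ContinuousMap.const Xs (ψ (z j0)) ⊔ ψ.comp (inclMap Xs) := by
    ext y
    simp [cutoffRetract, cutoffMax, hu1 y y.2, retractExt_eq_self hXU hr y.2, inclMap]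
  simp only [retraction, hp, retractExt_eq_self hXU hr (z j0).2]
  rw [← hν]
  change maxPlus κ z ((_ : C(Y, ℝ)).comp (inclMap Xs)) = maxPlus κ z (ψ.comp (inclMap Xs))
  rw [hF, maxPlus_const_sup (weights_nonpos h0 hle) h0]
  have htop := le_maxPlus κ z (ψ.comp (inclMap Xs)) j0
  rw [h0, zero_add] at htop
  exact max_eq_right htop

end Retraction

/-- if `X` is a closed subspace of a compact Hausdorff space `Y` which is a
retract of an open set `U ⊇ X`, then `I_f(X)` (identified with its image in `I_f(Y)` under
the map induced by the inclusion) is a neighborhood retract of `I_f(Y)`. -/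
theorem stmt15 {Y : Type*} [TopologicalSpace Y] [CompactSpace Y] [T2Space Y]
    (Xs : Set Y) (hXc : IsClosed Xs) (U : Set Y) (hU : IsOpen U) (hXU : Xs ⊆ U)
    (r : C(U, Xs)) (hr : ∀ (z : U) (hz : (z : Y) ∈ Xs), r z = ⟨(z : Y), hz⟩) :
    ∃ W : Set {μ : C(Y, ℝ) → ℝ // IsIf μ}, IsOpen W ∧
      (∀ μ : {μ : C(Y, ℝ) → ℝ // IsIf μ},
        μ.1 ∈ push (inclMap Xs) '' {ν : C(Xs, ℝ) → ℝ | IsIf ν} → μ ∈ W) ∧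
      ∃ R : W → C(Y, ℝ) → ℝ, Continuous R ∧
        (∀ μ : W, R μ ∈ push (inclMap Xs) '' {ν : C(Xs, ℝ) → ℝ | IsIf ν}) ∧
        (∀ μ : W, (μ : {μ : C(Y, ℝ) → ℝ // IsIf μ}).1 ∈
            push (inclMap Xs) '' {ν : C(Xs, ℝ) → ℝ | IsIf ν} →
          R μ = (μ : {μ : C(Y, ℝ) → ℝ // IsIf μ}).1) := by
  obtain ⟨u, hu_off, hu_X, hu⟩ := exists_continuous_zero_one_of_isClosed hU.isClosed_compl hXc
    (disjoint_compl_left_iff_subset.mpr hXU)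
  have hu0 : ∀ y, 0 ≤ u y := fun y => (hu y).1
  have hsupp : ∀ y, u y ≠ 0 → y ∈ U := fun y hy => by_contra fun hyU => hy (hu_off hyU)
  exact ⟨topPt ⁻¹' U, hU.preimage continuous_topPt,
    fun μ hμ => hXU (topPt_mem_of_mem_image hμ),
    (topPt ⁻¹' U).domRestrict (retraction r u hu0 hsupp),
    (continuousOn_retraction r u hu0 hsupp).domRestrict,
    fun μ => retraction_mem_image r u hu0 hsupp (fun y => (hu y).2) μ.2,
    fun μ hμ => retraction_eq_self r u hu0 hsupp hXU hr (fun y hy => hu_X hy) hμ⟩
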